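/- Let (φ, η) be an admissible pair of subsets of B (i.e. ℓ(φ^c) ⊆ η) and set I = ℓ(φ) ∩ η. Let J, K ⊆ B satisfy ℓ(J) ⊆ I, K ⊆ I, and ℓ(J) ∩ K = ∅ (with J ⊆ φ and K ⊆ η). Then the pair (φ \ J, η \ K) is admissible. -/
import Mathlib


/-- If `(φ, η)` is admissible (`ℓ(φᶜ) ⊆ η`), `I = ℓ(φ) ∩ η`, and `J, K ⊆ B`
satisfy `ℓ(J) ⊆ I`, `K ⊆ I`, `ℓ(J) ∩ K = ∅`, `J ⊆ φ`, `K ⊆ η`, then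
`(φ \ J, η \ K)` is admissible. -/
theorem sub_pair_admissible {B : Type*} [Fintype B] [DecidableEq B]
    (σ : Equiv.Perm B) (φ η J K : Finset B)
    (hadm : φᶜ.image ⇑σ.symm ⊆ η)
    (hJ : J.image ⇑σ.symm ⊆ φ.image ⇑σ.symm ∩ η)
    (hK : K ⊆ φ.image ⇑σ.symm ∩ η)
    (hdisj : J.image ⇑σ.symm ∩ K = ∅)
    (hJφ : J ⊆ φ) (hKη : K ⊆ η) :
    (φ \ J)ᶜ.image ⇑σ.symm ⊆ η \ K := by
  intro x hx
  obtain ⟨b, hb, rfl⟩ := Finset.mem_image.mp hx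
  rw [Finset.mem_compl, Finset.mem_sdiff, not_and_or, not_not] at hb
  rw [Finset.mem_sdiff]
  rcases hb with hb | hb
  · refine ⟨hadm (Finset.mem_image_of_mem _ (Finset.mem_compl.mpr hb)), fun hxK => ?_⟩
    have := (Finset.mem_inter.mp (hK hxK)).1
    obtain ⟨c, hc, hcx⟩ := Finset.mem_image.mp this
    exact hb (by simpa using σ.symm.injective hcx ▸ hc)
  · have hmem : σ.symm b ∈ J.image ⇑σ.symm := Finset.mem_image_of_mem _ hb
    refine ⟨(Finset.mem_inter.mp (hJ hmem)).2, fun hxK => ?_⟩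
    have : σ.symm b ∈ J.image ⇑σ.symm ∩ K := Finset.mem_inter.mpr ⟨hmem, hxK⟩
    simp [hdisj] at this
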